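/- Consider a commutative square of functors with i : K' ⥤ K and j : L' ⥤ L fully faithful, injective on objects, and isofibrations, f : K ⥤ L, f' : K' ⥤ L' with f ∘ i = j ∘ f'. Then the induced functor K' ⥤ K ×_L L' into the strict pullback is an equivalence if and only if (1) an object k of K is in the essential image of i exactly when f(k) is in the essential image of j, and (2) a morphism t : i(k₀') → i(k₁') is in the image of i exactly when f(t) is in the image of j. -/

import Mathlib

open CategoryTheory

universe v₁ v₂ v₃ v₄ u₁ u₂ u₃ u₄

/-- A functor is an isofibration if every isomorphism in the base whose source has a lift
lifts to an isomorphism. -/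
def Isofibration {A : Type u₁} [Category.{v₁} A] {B : Type u₂} [Category.{v₂} B]
    (F : A ⥤ B) : Prop :=
  ∀ (a : A) (b : B) (e : F.obj a ≅ b),
    ∃ (a' : A) (e' : a ≅ a') (hb : F.obj a' = b), F.map e'.hom = e.hom ≫ eqToHom hb.symm

/-- The strict pullback of categories along `f : K ⥤ L` and `j : L' ⥤ L`:
objects are pairs `(k, l')` with `f.obj k = j.obj l'`. -/
structure StrictPullback {K : Type u₁} [Category.{v₁} K] {L : Type u₂} [Category.{v₂} L]
    {L' : Type u₃} [Category.{v₃} L'] (f : K ⥤ L) (j : L' ⥤ L) where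
  k : K
  l : L'
  w : f.obj k = j.obj l

instance StrictPullback.category {K : Type u₁} [Category.{v₁} K] {L : Type u₂} [Category.{v₂} L]
    {L' : Type u₃} [Category.{v₃} L'] (f : K ⥤ L) (j : L' ⥤ L) :
    Category (StrictPullback f j) where
  Hom a b := {tu : (a.k ⟶ b.k) × (a.l ⟶ b.l) //
    f.map tu.1 = eqToHom a.w ≫ j.map tu.2 ≫ eqToHom b.w.symm}
  id a := ⟨(𝟙 a.k, 𝟙 a.l), by simp⟩
  comp {a b c} α β := ⟨(α.1.1 ≫ β.1.1, α.1.2 ≫ β.1.2), by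
    simp [α.2, β.2]⟩
  id_comp α := by apply Subtype.ext; simp
  comp_id α := by apply Subtype.ext; simp
  assoc α β γ := by apply Subtype.ext; simp

/-- The functor `K' ⥤ K ×_L L'` induced by a strictly commuting square `i ⋙ f = f' ⋙ j`. -/
def inducedToPullback {K' : Type u₄} [Category.{v₄} K'] {K : Type u₁} [Category.{v₁} K]
    {L : Type u₂} [Category.{v₂} L] {L' : Type u₃} [Category.{v₃} L']
    (i : K' ⥤ K) (j : L' ⥤ L) (f : K ⥤ L) (f' : K' ⥤ L') (h : i ⋙ f = f' ⋙ j) :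
    K' ⥤ StrictPullback f j where
  obj k' := ⟨i.obj k', f'.obj k', Functor.congr_obj h k'⟩
  map {a b} t := ⟨(i.map t, f'.map t), by
    have := Functor.congr_hom h t
    simpa using this⟩
  map_id a := by
    apply Subtype.ext
    show (i.map (𝟙 a), f'.map (𝟙 a)) = (𝟙 (i.obj a), 𝟙 (f'.obj a))
    simp
  map_comp {a b c} α β := by
    apply Subtype.ext
    show (i.map (α ≫ β), f'.map (α ≫ β)) = (i.map α ≫ i.map β, f'.map α ≫ f'.map β)
    simp


/-
The induced functor `G : K' ⥤ K ×_L L'` composed with the projection to `K` is `i`, and when `j`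
is fully faithful so is that projection, since the `L'`-component of a morphism is forced by its
`K`-component. Hence `G` is faithful because `i` is, full exactly when every `t` whose image
`f t` comes from `L'` comes from `K'`, and essentially surjective exactly when every `k` with
`f k` in the essential image of `j` is in the essential image of `i`; the isofibration property
of `j` replaces an object `l'` with `j l' ≅ f k` by one with `j l' = f k`, i.e. by an object
`(k, l')` of the strict pullback.
-/

namespace StrictPullback

variable {K : Type u₁} [Category.{v₁} K] {L : Type u₂} [Category.{v₂} L]
  {L' : Type u₃} [Category.{v₃} L'] {f : K ⥤ L} {j : L' ⥤ L}

@[ext]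
lemma hom_ext {a b : StrictPullback f j} {α β : a ⟶ b} (h₁ : α.1.1 = β.1.1)
    (h₂ : α.1.2 = β.1.2) : α = β :=
  Subtype.ext (Prod.ext h₁ h₂)

variable (f j) in
def fst : StrictPullback f j ⥤ K where
  obj a := a.k
  map α := α.1.1

instance [j.Faithful] : (fst f j).Faithful where
  map_injective {a b} α β hαβ := by
    ext
    · exact hαβ
    · apply j.map_injective
      have hα := α.2
      have hβ := β.2
      rw [show α.1.1 = β.1.1 from hαβ, hβ] at hα
      simpa only [cancel_epi, cancel_mono] using hα.symm

instance [j.Full] : (fst f j).Full where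
  map_surjective {a b} (t : a.k ⟶ b.k) :=
    ⟨⟨(t, j.preimage (eqToHom a.w.symm ≫ f.map t ≫ eqToHom b.w)), by simp⟩, rfl⟩

end StrictPullback

lemma Isofibration.exists_obj_eq_of_mem_essImage {A : Type u₁} [Category.{v₁} A]
    {B : Type u₂} [Category.{v₂} B] {F : A ⥤ B} (hF : Isofibration F) {b : B}
    (hb : F.essImage b) : ∃ a, F.obj a = b := by
  obtain ⟨a, ⟨e⟩⟩ := hb
  obtain ⟨a', -, hb, -⟩ := hF a b e
  exact ⟨a', hb⟩

lemma map_mem_essImage_of_comp_eq {K' : Type u₄} [Category.{v₄} K'] {K : Type u₁}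
    [Category.{v₁} K] {L : Type u₂} [Category.{v₂} L] {L' : Type u₃} [Category.{v₃} L']
    {i : K' ⥤ K} {j : L' ⥤ L} {f : K ⥤ L} {f' : K' ⥤ L'} (h : i ⋙ f = f' ⋙ j) {k : K}
    (hk : i.essImage k) : j.essImage (f.obj k) := by
  obtain ⟨k', ⟨e⟩⟩ := hk
  exact ⟨f'.obj k', ⟨eqToIso (Functor.congr_obj h k').symm ≪≫ f.mapIso e⟩⟩

section InducedToPullback

variable {K' : Type u₄} [Category.{v₄} K'] {K : Type u₁} [Category.{v₁} K]
  {L : Type u₂} [Category.{v₂} L] {L' : Type u₃} [Category.{v₃} L']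
  (i : K' ⥤ K) (j : L' ⥤ L) (f : K ⥤ L) (f' : K' ⥤ L') (h : i ⋙ f = f' ⋙ j)

lemma inducedToPullback_comp_fst :
    inducedToPullback i j f f' h ⋙ StrictPullback.fst f j = i := rfl

instance inducedToPullback_faithful [i.Faithful] : (inducedToPullback i j f f' h).Faithful :=
  Functor.Faithful.of_comp_eq (inducedToPullback_comp_fst i j f f' h)

lemma map_map_eq_of_comp_eq {k₀' k₁' : K'} (t' : k₀' ⟶ k₁') :
    f.map (i.map t') = eqToHom (Functor.congr_obj h k₀') ≫ j.map (f'.map t') ≫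
      eqToHom (Functor.congr_obj h k₁').symm :=
  ((inducedToPullback i j f f' h).map t').2

lemma inducedToPullback_essSurj_iff [j.Full] [j.Faithful] (hj : Isofibration j) :
    (inducedToPullback i j f f' h).EssSurj ↔
      ∀ k : K, i.essImage k ↔ j.essImage (f.obj k) := by
  refine ⟨fun hG k => ⟨map_mem_essImage_of_comp_eq h, fun hk => ?_⟩,
    fun hobj => ⟨fun X => ?_⟩⟩
  · obtain ⟨l', hl'⟩ := hj.exists_obj_eq_of_mem_essImage hk
    let X : StrictPullback f j := ⟨k, l', hl'.symm⟩
    exact ⟨_, ⟨(StrictPullback.fst f j).mapIso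
      ((inducedToPullback i j f f' h).objObjPreimageIso X)⟩⟩
  · obtain ⟨k', ⟨e⟩⟩ := (hobj X.k).2 ⟨X.l, ⟨eqToIso X.w.symm⟩⟩
    exact ⟨k', ⟨(StrictPullback.fst f j).preimageIso e⟩⟩

lemma inducedToPullback_full_iff [j.Faithful] :
    (inducedToPullback i j f f' h).Full ↔
      ∀ (k₀' k₁' : K') (t : i.obj k₀' ⟶ i.obj k₁'),
        (∃ t' : k₀' ⟶ k₁', i.map t' = t) ↔
        (∃ u : f'.obj k₀' ⟶ f'.obj k₁',
          f.map t = eqToHom (Functor.congr_obj h k₀') ≫ j.map u ≫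
            eqToHom (Functor.congr_obj h k₁').symm) := by
  refine ⟨fun hG k₀' k₁' t => ⟨?_, fun ⟨u, hu⟩ => ?_⟩, fun hmor => ⟨fun {k₀' k₁'} m => ?_⟩⟩
  · rintro ⟨t', rfl⟩
    exact ⟨f'.map t', map_map_eq_of_comp_eq i j f f' h t'⟩
  · obtain ⟨t', ht'⟩ := (inducedToPullback i j f f' h).map_surjective ⟨(t, u), hu⟩
    exact ⟨t', congrArg (fun m => m.1.1) ht'⟩
  · obtain ⟨t', ht'⟩ := (hmor k₀' k₁' m.1.1).2 ⟨m.1.2, m.2⟩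
    exact ⟨t', (StrictPullback.fst f j).map_injective ht'⟩

end InducedToPullback

theorem inducedToPullback_isEquivalence_iff_general
    {K' : Type u₄} [Category.{v₄} K'] {K : Type u₁} [Category.{v₁} K]
    {L : Type u₂} [Category.{v₂} L] {L' : Type u₃} [Category.{v₃} L']
    (i : K' ⥤ K) (j : L' ⥤ L) (f : K ⥤ L) (f' : K' ⥤ L') (h : i ⋙ f = f' ⋙ j)
    [i.Faithful] [j.Full] [j.Faithful]
    (hj_isofib : Isofibration j) :
    (inducedToPullback i j f f' h).IsEquivalence ↔
      ((∀ k : K, (∃ k' : K', Nonempty (i.obj k' ≅ k)) ↔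
          (∃ l' : L', Nonempty (j.obj l' ≅ f.obj k))) ∧
       (∀ (k₀' k₁' : K') (t : i.obj k₀' ⟶ i.obj k₁'),
          (∃ t' : k₀' ⟶ k₁', i.map t' = t) ↔
          (∃ u : f'.obj k₀' ⟶ f'.obj k₁',
            f.map t = eqToHom (Functor.congr_obj h k₀') ≫ j.map u ≫
              eqToHom (Functor.congr_obj h k₁').symm))) := by
  have hobj := inducedToPullback_essSurj_iff i j f f' h hj_isofib
  have hmor := inducedToPullback_full_iff i j f f' h
  refine ⟨fun hG => ⟨hobj.1 hG.essSurj, hmor.1 hG.full⟩, fun ⟨hk, ht⟩ => ?_⟩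
  have := hobj.2 hk
  have := hmor.2 ht
  exact { }

/-- For a commuting square of functors with `i` and `j` fully faithful, injective on
objects, and isofibrations, the induced functor to the strict pullback is an equivalence
iff (1) an object `k` of `K` is essentially in the image of `i` exactly when `f k` is
essentially in the image of `j`, and (2) a morphism `t : i k₀' ⟶ i k₁'` is in the image of
`i` exactly when `f t` is in the image of `j`. -/
theorem inducedToPullback_isEquivalence_iff
    {K' : Type u₄} [Category.{v₄} K'] {K : Type u₁} [Category.{v₁} K]
    {L : Type u₂} [Category.{v₂} L] {L' : Type u₃} [Category.{v₃} L']
    (i : K' ⥤ K) (j : L' ⥤ L) (f : K ⥤ L) (f' : K' ⥤ L') (h : i ⋙ f = f' ⋙ j)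
    [i.Full] [i.Faithful] [j.Full] [j.Faithful]
    (hi_inj : Function.Injective i.obj) (hj_inj : Function.Injective j.obj)
    (hi_isofib : Isofibration i) (hj_isofib : Isofibration j) :
    (inducedToPullback i j f f' h).IsEquivalence ↔
      ((∀ k : K, (∃ k' : K', Nonempty (i.obj k' ≅ k)) ↔
          (∃ l' : L', Nonempty (j.obj l' ≅ f.obj k))) ∧
       (∀ (k₀' k₁' : K') (t : i.obj k₀' ⟶ i.obj k₁'),
          (∃ t' : k₀' ⟶ k₁', i.map t' = t) ↔
          (∃ u : f'.obj k₀' ⟶ f'.obj k₁',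
            f.map t = eqToHom (Functor.congr_obj h k₀') ≫ j.map u ≫
              eqToHom (Functor.congr_obj h k₁').symm))) :=
  inducedToPullback_isEquivalence_iff_general i j f f' h hj_isofib
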